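/- arXiv:math/0310302 — 4 statements merged into one kernel-verified Lean document; each statement's English description precedes it below -/
import Mathlib

section
/- Let (X, d) be a metric space, μ a Borel measure on X that is finite on bounded sets, q ∈ X a fixed point, and C > 0. Suppose (i) for every r > 0, every L ≥ 0 and every L-Lipschitz function f : X → ℝ vanishing outside the open ball B(q, r), one has (∫_X |f|⁴ dμ)^{1/4} ≤ C · L · μ(B(q, r))^{1/2}; and (ii) there exist c₀ > 0 and ρ₀ > 0 such that μ(B(q, ρ)) ≥ c₀ ρ⁴ for all 0 < ρ ≤ ρ₀. Then μ(B(q, s)) ≥ C₁ s⁴ for all s > 0, where C₁ = min(1, 1/(256 C⁴)); in particular C₁ depends only on C. -/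
/-!
Testing the Sobolev inequality on the tent function `x ↦ max (r - dist x q) 0`, which is
1-Lipschitz, supported in `B(q, r)` and at least `r / 2` on `B(q, r / 2)`, gives
`(r / 2)⁴ V(r / 2) ≤ C⁴ V(r)²` for `V(r) = μ(B(q, r))`. For the normalized volume
`g(r) = 256 C⁴ V(r) / r⁴` this reads `g(r / 2) ≤ g(r)²`. So if `g(s) < 1`, then
`g(s / 2ⁿ) ≤ g(s) ^ 2ⁿ` tends to `0`, contradicting the lower bound `g ≥ 256 C⁴ c₀`
on small balls.
-/

open Metric MeasureTheory Filter

section ballBump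

variable {X : Type*} [PseudoMetricSpace X]

def ballBump (q : X) (r : ℝ) (x : X) : ℝ := max (r - dist x q) 0

variable (q : X) (r : ℝ)

theorem lipschitzWith_ballBump : LipschitzWith 1 (ballBump q r) := by
  have : LipschitzWith 1 fun x => r - dist x q := by
    simpa using (LipschitzWith.const (α := X) r).sub (LipschitzWith.dist_left q)
  exact this.max_const 0

theorem ballBump_nonneg (x : X) : 0 ≤ ballBump q r x := le_max_right _ _

theorem ballBump_eq_zero_of_notMem_ball {x : X} (hx : x ∉ ball q r) : ballBump q r x = 0 :=
  max_eq_right (sub_nonpos.mpr (not_lt.mp hx))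

theorem half_le_ballBump {x : X} (hx : x ∈ ball q (r / 2)) : r / 2 ≤ ballBump q r x := by
  rw [mem_ball] at hx
  exact le_max_of_le_left (by linarith)

theorem ofReal_mul_measure_ball_half_le_lintegral_ballBump [MeasurableSpace X]
    [OpensMeasurableSpace X] (μ : Measure X) (hr : 0 ≤ r) (n : ℕ) :
    ENNReal.ofReal ((r / 2) ^ n) * μ (ball q (r / 2))
      ≤ ∫⁻ x, ENNReal.ofReal (|ballBump q r x| ^ n) ∂μ :=
  calc ENNReal.ofReal ((r / 2) ^ n) * μ (ball q (r / 2))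
      = ∫⁻ _ in ball q (r / 2), ENNReal.ofReal ((r / 2) ^ n) ∂μ := (setLIntegral_const _ _).symm
    _ ≤ ∫⁻ x in ball q (r / 2), ENNReal.ofReal (|ballBump q r x| ^ n) ∂μ := by
        refine setLIntegral_mono' measurableSet_ball fun x hx => ENNReal.ofReal_le_ofReal ?_
        rw [abs_of_nonneg (ballBump_nonneg q r x)]
        exact pow_le_pow_left₀ (by linarith) (half_le_ballBump q r hx) n
    _ ≤ ∫⁻ x, ENNReal.ofReal (|ballBump q r x| ^ n) ∂μ := setLIntegral_le_lintegral _ _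

end ballBump

theorem ENNReal.le_pow_mul_sq_of_rpow_le {a b c : ENNReal}
    (h : a ^ ((1 : ℝ) / 4) ≤ b * c ^ ((1 : ℝ) / 2)) : a ≤ b ^ 4 * c ^ 2 := by
  rw [one_div, ENNReal.rpow_inv_le_iff (by norm_num), ENNReal.mul_rpow_of_nonneg _ _ (by norm_num),
    ← ENNReal.rpow_mul] at h
  norm_num at h
  exact_mod_cast h

theorem one_le_of_apply_half_le_sq {g : ℝ → ℝ} (hg : ∀ r, 0 < r → 0 ≤ g r)
    (hhalf : ∀ r, 0 < r → g (r / 2) ≤ g r ^ 2) {t ρ₀ : ℝ} (ht : 0 < t) (hρ₀ : 0 < ρ₀)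
    (hsmall : ∀ ρ, 0 < ρ → ρ ≤ ρ₀ → t ≤ g ρ) {s : ℝ} (hs : 0 < s) : 1 ≤ g s := by
  by_contra! hlt
  have hiter : ∀ n : ℕ, g (s / 2 ^ n) ≤ g s ^ 2 ^ n := by
    intro n
    induction n with
    | zero => simp
    | succ n ih =>
      calc g (s / 2 ^ (n + 1)) = g (s / 2 ^ n / 2) := by rw [pow_succ, div_div]
        _ ≤ g (s / 2 ^ n) ^ 2 := hhalf _ (by positivity)
        _ ≤ (g s ^ 2 ^ n) ^ 2 := pow_le_pow_left₀ (hg _ (by positivity)) ih 2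
        _ = g s ^ 2 ^ (n + 1) := by rw [← pow_mul, pow_succ]
  have hpow : Tendsto (fun n : ℕ => g s ^ 2 ^ n) atTop (nhds 0) :=
    (tendsto_pow_atTop_nhds_zero_of_lt_one (hg s hs) hlt).comp
      (tendsto_pow_atTop_atTop_of_one_lt one_lt_two)
  have hrad : Tendsto (fun n : ℕ => s / 2 ^ n) atTop (nhds 0) := by
    simpa [div_eq_mul_inv] using (tendsto_pow_atTop_nhds_zero_of_lt_one
      (r := (2 : ℝ)⁻¹) (by norm_num) (by norm_num)).const_mul s
  obtain ⟨n, hn_pow, hn_rad⟩ :=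
    ((hpow.eventually (gt_mem_nhds ht)).and (hrad.eventually (ge_mem_nhds hρ₀))).exists
  exact (hsmall _ (by positivity) hn_rad).trans (hiter n) |>.not_gt hn_pow

theorem pow_div_le_of_half_pow_mul_le_sq {v : ℝ → ℝ} {C c₀ ρ₀ : ℝ} (hC : 0 < C) (hc₀ : 0 < c₀)
    (hρ₀ : 0 < ρ₀) (hv : ∀ r, 0 ≤ v r)
    (hrec : ∀ r, 0 < r → (r / 2) ^ 4 * v (r / 2) ≤ C ^ 4 * v r ^ 2)
    (hsmall : ∀ ρ, 0 < ρ → ρ ≤ ρ₀ → c₀ * ρ ^ 4 ≤ v ρ) {s : ℝ} (hs : 0 < s) :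
    s ^ 4 / (256 * C ^ 4) ≤ v s := by
  have hC4 : 0 < 256 * C ^ 4 := by positivity
  set g : ℝ → ℝ := fun r => 256 * C ^ 4 * v r / r ^ 4
  have hg : ∀ r, 0 < r → 0 ≤ g r := fun r _ => by positivity [hv r]
  have hhalf : ∀ r, 0 < r → g (r / 2) ≤ g r ^ 2 := by
    intro r hr
    simp only [g, div_pow, ← pow_mul]
    rw [div_le_div_iff₀ (by positivity) (by positivity)]
    linear_combination (4096 * C ^ 4 * r ^ 4) * hrec r hr
  have hsmall' : ∀ ρ, 0 < ρ → ρ ≤ ρ₀ → 256 * C ^ 4 * c₀ ≤ g ρ := by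
    intro ρ hρ hρle
    rw [le_div_iff₀ (by positivity), mul_assoc]
    exact mul_le_mul_of_nonneg_left (hsmall ρ hρ hρle) hC4.le
  have := one_le_of_apply_half_le_sq hg hhalf (by positivity) hρ₀ hsmall' hs
  rwa [one_le_div (by positivity), ← div_le_iff₀' hC4] at this

/-- Lower volume growth lemma: on a metric measure space, a Sobolev-type
inequality (for Lipschitz functions supported in balls around `q`) together
with the small-ball density condition forces Euclidean lower volume growth
`μ(B(q,s)) ≥ C₁ s⁴` with `C₁ = min(1, 1/(256 C⁴))` depending only on `C`. -/
theorem lower_volume_growth {X : Type*} [MetricSpace X] [MeasurableSpace X]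
    [BorelSpace X] (μ : Measure X)
    (hfinite : ∀ s : Set X, Bornology.IsBounded s → μ s < ⊤)
    (q : X) (C : ℝ) (hC : 0 < C)
    (hSob : ∀ r : ℝ, 0 < r → ∀ L : ℝ, 0 ≤ L → ∀ f : X → ℝ,
      LipschitzWith (Real.toNNReal L) f → (∀ x ∉ ball q r, f x = 0) →
      (∫⁻ x, ENNReal.ofReal (|f x| ^ 4) ∂μ) ^ ((1 : ℝ) / 4)
        ≤ ENNReal.ofReal (C * L) * (μ (ball q r)) ^ ((1 : ℝ) / 2))
    (c₀ ρ₀ : ℝ) (hc₀ : 0 < c₀) (hρ₀ : 0 < ρ₀)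
    (hsmall : ∀ ρ : ℝ, 0 < ρ → ρ ≤ ρ₀ → ENNReal.ofReal (c₀ * ρ ^ 4) ≤ μ (ball q ρ)) :
    ∀ s : ℝ, 0 < s →
      ENNReal.ofReal (min 1 (1 / (256 * C ^ 4)) * s ^ 4) ≤ μ (ball q s) := by
  intro s hs
  have hfin (r : ℝ) : μ (ball q r) ≠ ⊤ := (hfinite _ isBounded_ball).ne
  have hrec (r : ℝ) (hr : 0 < r) :
      (r / 2) ^ 4 * (μ (ball q (r / 2))).toReal ≤ C ^ 4 * (μ (ball q r)).toReal ^ 2 := by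
    have hbump := hSob r hr 1 zero_le_one (ballBump q r)
      (by simpa using lipschitzWith_ballBump q r) fun x => ballBump_eq_zero_of_notMem_ball q r
    rw [mul_one] at hbump
    have h := ENNReal.le_pow_mul_sq_of_rpow_le <|
      (ENNReal.rpow_le_rpow (ofReal_mul_measure_ball_half_le_lintegral_ballBump q r μ hr.le 4)
        (by norm_num)).trans hbump
    rw [← ENNReal.ofReal_pow hC.le] at h
    have hreal := ENNReal.toReal_mono (by finiteness [hfin r]) h
    rwa [ENNReal.toReal_mul, ENNReal.toReal_mul, ENNReal.toReal_ofReal (by positivity),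
      ENNReal.toReal_ofReal (by positivity), ENNReal.toReal_pow] at hreal
  have hgrowth :=
    pow_div_le_of_half_pow_mul_le_sq hC hc₀ hρ₀ (fun _ => ENNReal.toReal_nonneg) hrec
      (fun ρ hρ hρle => (ENNReal.ofReal_le_iff_le_toReal (hfin ρ)).1 (hsmall ρ hρ hρle)) hs
  rw [ENNReal.ofReal_le_iff_le_toReal (hfin s)]
  calc min 1 (1 / (256 * C ^ 4)) * s ^ 4 ≤ 1 / (256 * C ^ 4) * s ^ 4 := by
        gcongr; exact min_le_right _ _
    _ = s ^ 4 / (256 * C ^ 4) := by ring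
    _ ≤ _ := hgrowth
end

section
/- Let V : (0, ∞) → (0, ∞) and C > 0 satisfy (r/2) · V(r/2)^{1/4} ≤ C · V(r)^{1/2} for every r > 0, and suppose there exist c₀ > 0 and ρ₀ > 0 such that V(ρ) ≥ c₀ ρ⁴ for all 0 < ρ ≤ ρ₀. Then V(r) ≥ min(1, 1/(256 C⁴)) · r⁴ for all r > 0. -/
open Real Filter

noncomputable def kappaSeq (C c₀ : ℝ) : ℕ → ℝ
  | 0 => c₀
  | n + 1 => Real.sqrt (kappaSeq C c₀ n) / (16 * C ^ 2)

lemma kappaSeq_pos {C c₀ : ℝ} (hC : 0 < C) (hc : 0 < c₀) : ∀ n, 0 < kappaSeq C c₀ n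
  | 0 => hc
  | n + 1 => by
      have h := kappaSeq_pos hC hc n
      simp only [kappaSeq]
      positivity

lemma kappaSeq_closed {C c₀ : ℝ} (hC : 0 < C) (hc : 0 < c₀) (n : ℕ) :
    kappaSeq C c₀ n = (1 / (256 * C ^ 4)) * (c₀ * (256 * C ^ 4)) ^ ((1/2 : ℝ) ^ n) := by
  induction n with
  | zero =>
    simp only [kappaSeq, pow_zero, Real.rpow_one]
    field_simp
  | succ n ih =>
    have hb : (0:ℝ) < c₀ * (256 * C ^ 4) := by positivity
    have hsqrtκ : Real.sqrt (1 / (256 * C ^ 4)) = 1 / (16 * C ^ 2) := by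
      rw [show (1 / (256 * C ^ 4) : ℝ) = (1 / (16 * C ^ 2)) ^ 2 by ring]
      exact Real.sqrt_sq (by positivity)
    simp only [kappaSeq, ih]
    rw [Real.sqrt_mul (by positivity) _, hsqrtκ, Real.sqrt_eq_rpow,
      ← Real.rpow_mul hb.le]
    rw [show (1/2 : ℝ) ^ n * (1/2) = (1/2 : ℝ) ^ (n+1) by rw [pow_succ]]
    ring

lemma kappaSeq_tendsto {C c₀ : ℝ} (hC : 0 < C) (hc : 0 < c₀) :
    Tendsto (kappaSeq C c₀) atTop (nhds (1 / (256 * C ^ 4))) := by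
  have hb : (0:ℝ) < c₀ * (256 * C ^ 4) := by positivity
  have h1 : Tendsto (fun n : ℕ => ((1:ℝ)/2) ^ n) atTop (nhds 0) :=
    tendsto_pow_atTop_nhds_zero_of_lt_one (by norm_num) (by norm_num)
  have h2 : Tendsto (fun n : ℕ => (c₀ * (256 * C ^ 4)) ^ (((1:ℝ)/2) ^ n)) atTop
      (nhds ((c₀ * (256 * C ^ 4)) ^ (0:ℝ))) :=
    Filter.Tendsto.rpow tendsto_const_nhds h1 (Or.inl hb.ne')
  rw [Real.rpow_zero] at h2
  have := (tendsto_const_nhds (x := (1 / (256 * C ^ 4) : ℝ)) (f := atTop (α := ℕ))).mul h2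
  rw [mul_one] at this
  refine this.congr fun n => ?_
  rw [kappaSeq_closed hC hc]

/-- Iteration step deducing Euclidean lower volume growth from the Sobolev-type
doubling inequality `(r/2) V(r/2)^{1/4} ≤ C V(r)^{1/2}` together with the
small-ball density hypothesis. -/
theorem lower_volume_growth_iteration (V : ℝ → ℝ) (C : ℝ) (hC : 0 < C)
    (hVpos : ∀ r, 0 < r → 0 < V r)
    (hineq : ∀ r, 0 < r → (r / 2) * (V (r / 2)) ^ ((1 : ℝ) / 4) ≤ C * (V r) ^ ((1 : ℝ) / 2))
    (c₀ ρ₀ : ℝ) (hc₀ : 0 < c₀) (hρ₀ : 0 < ρ₀)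
    (hsmall : ∀ ρ, 0 < ρ → ρ ≤ ρ₀ → c₀ * ρ ^ 4 ≤ V ρ) :
    ∀ r, 0 < r → min 1 (1 / (256 * C ^ 4)) * r ^ 4 ≤ V r := by
  -- main iteration lemma
  have key : ∀ n : ℕ, ∀ r : ℝ, 0 < r → r ≤ 2 ^ n * ρ₀ → kappaSeq C c₀ n * r ^ 4 ≤ V r := by
    intro n
    induction n with
    | zero =>
      intro r hr hrle
      simp only [pow_zero, one_mul] at hrle
      exact hsmall r hr hrle
    | succ n ih =>
      intro r hr hrle
      have hs : (0:ℝ) < r / 2 := by linarith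
      have hsle : r / 2 ≤ 2 ^ n * ρ₀ := by
        rw [pow_succ] at hrle; nlinarith [pow_pos (show (0:ℝ) < 2 by norm_num) n]
      have hκ := kappaSeq_pos hC hc₀ n
      have hIH := ih (r / 2) hs hsle
      have hVs : 0 < V (r / 2) := hVpos _ hs
      have hVr : 0 < V r := hVpos _ hr
      -- lower bound on V(r/2)^(1/4)
      have hpow : kappaSeq C c₀ n ^ ((1:ℝ)/4) * (r / 2) ≤ (V (r / 2)) ^ ((1:ℝ)/4) := by
        have h1 : (kappaSeq C c₀ n * (r / 2) ^ 4) ^ ((1:ℝ)/4) ≤ (V (r / 2)) ^ ((1:ℝ)/4) :=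
          Real.rpow_le_rpow (by positivity) hIH (by norm_num)
        calc kappaSeq C c₀ n ^ ((1:ℝ)/4) * (r / 2)
            = (kappaSeq C c₀ n * (r / 2) ^ 4) ^ ((1:ℝ)/4) := by
              rw [Real.mul_rpow hκ.le (by positivity), ← Real.rpow_natCast (r/2) 4,
                ← Real.rpow_mul hs.le]
              norm_num
          _ ≤ (V (r / 2)) ^ ((1:ℝ)/4) := h1
      -- combine with the Sobolev-type inequality
      have h2 : kappaSeq C c₀ n ^ ((1:ℝ)/4) * (r / 2) ^ 2 ≤ C * (V r) ^ ((1:ℝ)/2) := by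
        have := hineq r hr
        nlinarith [this, hpow, hs.le, Real.rpow_natCast (r/2) 2]
      -- square both sides
      have hA : (0:ℝ) ≤ kappaSeq C c₀ n ^ ((1:ℝ)/4) * (r / 2) ^ 2 := by positivity
      have h3 : (kappaSeq C c₀ n ^ ((1:ℝ)/4) * (r / 2) ^ 2) ^ 2
          ≤ (C * (V r) ^ ((1:ℝ)/2)) ^ 2 := by
        exact pow_le_pow_left₀ hA h2 2
      have hq1 : (kappaSeq C c₀ n ^ ((1:ℝ)/4)) ^ 2 = Real.sqrt (kappaSeq C c₀ n) := by
        rw [Real.sqrt_eq_rpow, ← Real.rpow_natCast (kappaSeq C c₀ n ^ ((1:ℝ)/4)) 2,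
          ← Real.rpow_mul hκ.le]
        norm_num
      have hq2 : ((V r) ^ ((1:ℝ)/2)) ^ 2 = V r := by
        rw [← Real.rpow_natCast ((V r) ^ ((1:ℝ)/2)) 2, ← Real.rpow_mul hVr.le]
        norm_num
      have h4 : Real.sqrt (kappaSeq C c₀ n) * (r / 2) ^ 4 ≤ C ^ 2 * V r := by
        calc Real.sqrt (kappaSeq C c₀ n) * (r / 2) ^ 4
            = (kappaSeq C c₀ n ^ ((1:ℝ)/4) * (r / 2) ^ 2) ^ 2 := by
              rw [mul_pow, hq1]; ring
          _ ≤ (C * (V r) ^ ((1:ℝ)/2)) ^ 2 := h3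
          _ = C ^ 2 * V r := by rw [mul_pow, hq2]
      show Real.sqrt (kappaSeq C c₀ n) / (16 * C ^ 2) * r ^ 4 ≤ V r
      rw [div_mul_eq_mul_div, div_le_iff₀ (by positivity)]
      nlinarith [h4]
  intro r hr
  -- pass to the limit n → ∞
  have hlim : 1 / (256 * C ^ 4) * r ^ 4 ≤ V r := by
    obtain ⟨N, hN⟩ := pow_unbounded_of_one_lt (r / ρ₀) (show (1:ℝ) < 2 by norm_num)
    have hev : ∀ᶠ n in atTop, kappaSeq C c₀ n * r ^ 4 ≤ V r := by
      filter_upwards [eventually_ge_atTop N] with n hn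
      refine key n r hr ?_
      have h1 : r / ρ₀ ≤ 2 ^ n := le_trans hN.le (pow_le_pow_right₀ (by norm_num) hn)
      calc r = (r / ρ₀) * ρ₀ := by field_simp
        _ ≤ 2 ^ n * ρ₀ := by nlinarith
    have htd : Tendsto (fun n => kappaSeq C c₀ n * r ^ 4) atTop
        (nhds (1 / (256 * C ^ 4) * r ^ 4)) :=
      (kappaSeq_tendsto hC hc₀).mul tendsto_const_nhds
    exact le_of_tendsto htd hev
  calc min 1 (1 / (256 * C ^ 4)) * r ^ 4 ≤ 1 / (256 * C ^ 4) * r ^ 4 := by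
        have := min_le_right (1:ℝ) (1 / (256 * C ^ 4))
        nlinarith [pow_pos hr 4]
    _ ≤ V r := hlim
end

section
/- Let α > 0, c₁ < 0, and c₂ ≥ 0 be real numbers with 1 + 2 c₁ α > 0. Let f : ℝ → ℝ be differentiable at every r ≥ 1, with f(r) ≥ 0 and f(r) ≤ c₁ · r · f'(r) + c₂ · r^{-2α} for all r ≥ 1. Then there exists a constant K ≥ 0 such that f(r) ≤ K · r^{m} for all r ≥ 1, where m = max(1/c₁, -2α). -/
/-!
Subtracting the particular solution `c₃ r^(-2α)`, `c₃ = c₂ / (1 + 2 c₁ α)`, of the equation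
`f = c₁ r f' + c₂ r^(-2α)` leaves `g` with `g ≤ c₁ r g'`. Since `c₁ < 0`, this says exactly that
`g(r) r^(-1/c₁)` is nonincreasing, so `g(r) ≤ g(1) r^(1/c₁)` and `f ≤ g(1) r^(1/c₁) + c₃ r^(-2α)`.
-/

open Real Set

theorem sub_rpow_le_const_mul_deriv {f : ℝ → ℝ} {c k p r : ℝ} (hr : 0 < r)
    (hf : DifferentiableAt ℝ f r) (h : f r ≤ c * r * deriv f r + k * (1 - c * p) * r ^ p) :
    f r - k * r ^ p ≤ c * r * deriv (fun x => f x - k * x ^ p) r := by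
  have hderiv : deriv (fun x => f x - k * x ^ p) r = deriv f r - k * (p * r ^ (p - 1)) :=
    (hf.hasDerivAt.sub ((hasDerivAt_rpow_const (Or.inl hr.ne')).const_mul k)).deriv
  have hr_pow : r * r ^ (p - 1) = r ^ p := by
    rw [rpow_sub_one hr.ne']; field_simp
  rw [hderiv]
  linear_combination h + c * k * p * hr_pow

theorem antitoneOn_mul_rpow_of_le_const_mul_deriv {g : ℝ → ℝ} {c a : ℝ} (hc : c < 0)
    (ha : 0 < a) (hg : ∀ r ∈ Ici a, DifferentiableAt ℝ g r)
    (h : ∀ r ∈ Ici a, g r ≤ c * r * deriv g r) :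
    AntitoneOn (fun r => g r * r ^ (-(1 / c))) (Ici a) := by
  set b := -(1 / c)
  have hderiv : ∀ r ∈ Ici a,
      HasDerivAt (fun r => g r * r ^ b) (deriv g r * r ^ b + g r * (b * r ^ (b - 1))) r :=
    fun r hr => (hg r hr).hasDerivAt.mul
      (hasDerivAt_rpow_const (Or.inl (ha.trans_le hr).ne'))
  refine antitoneOn_of_deriv_nonpos (convex_Ici a)
    (fun r hr => (hderiv r hr).continuousAt.continuousWithinAt)
    (fun r hr => (hderiv r (interior_subset hr)).differentiableAt.differentiableWithinAt)
    fun r hr => ?_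
  rw [interior_Ici] at hr
  have hr0 : 0 < r := ha.trans hr
  have hslope : r * deriv g r + b * g r ≤ 0 := by
    have hgc : g r ≤ r * deriv g r * c := by linarith [h r (mem_Ici.mpr hr.le)]
    have := (le_div_iff_of_neg hc).mpr hgc
    have hb : b * g r = -(g r / c) := by simp only [b]; ring
    linarith
  have hr_pow : r ^ b = r ^ (b - 1) * r := by
    rw [rpow_sub_one hr0.ne']; field_simp
  rw [(hderiv r (mem_Ici.mpr hr.le)).deriv, hr_pow]
  nlinarith [rpow_pos_of_pos hr0 (b - 1)]

theorem le_mul_rpow_of_le_const_mul_deriv {g : ℝ → ℝ} {c : ℝ} (hc : c < 0)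
    (hg : ∀ r ∈ Ici 1, DifferentiableAt ℝ g r)
    (h : ∀ r ∈ Ici 1, g r ≤ c * r * deriv g r) {r : ℝ} (hr : 1 ≤ r) :
    g r ≤ g 1 * r ^ (1 / c) := by
  have hanti := antitoneOn_mul_rpow_of_le_const_mul_deriv hc one_pos hg h
    self_mem_Ici (show r ∈ Ici 1 from hr) hr
  simp only at hanti
  have hpos : 0 < r ^ (1 / c) := rpow_pos_of_pos (one_pos.trans_le hr) _
  rw [rpow_neg (one_pos.trans_le hr).le, one_rpow, mul_one, ← div_eq_mul_inv,
    div_le_iff₀ hpos] at hanti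
  exact hanti

theorem le_mul_rpow_max_of_le_add {x A B p q r : ℝ} (hr : 1 ≤ r) (hB : 0 ≤ B)
    (h : x ≤ A * r ^ p + B * r ^ q) : x ≤ (max A 0 + B) * r ^ max p q := by
  have hp : A * r ^ p ≤ max A 0 * r ^ max p q :=
    calc A * r ^ p ≤ max A 0 * r ^ p := by
          gcongr
          exact le_max_left A 0
      _ ≤ max A 0 * r ^ max p q := by
          gcongr
          exact le_max_left p q
  have hq : B * r ^ q ≤ B * r ^ max p q :=
    mul_le_mul_of_nonneg_left (rpow_le_rpow_of_exponent_le hr (le_max_right p q)) hB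
  linarith

theorem decay_from_differential_inequality_with_source_general (α c₁ c₂ : ℝ)
    (hc₁ : c₁ < 0) (hc₂ : 0 ≤ c₂) (hpos : 0 < 1 + 2 * c₁ * α)
    (f : ℝ → ℝ)
    (hdiff : ∀ r : ℝ, 1 ≤ r → DifferentiableAt ℝ f r)
    (hineq : ∀ r : ℝ, 1 ≤ r → f r ≤ c₁ * r * deriv f r + c₂ * r ^ (-2 * α)) :
    ∃ K : ℝ, 0 ≤ K ∧ ∀ r : ℝ, 1 ≤ r → f r ≤ K * r ^ (max (1 / c₁) (-2 * α)) := by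
  set c₃ := c₂ / (1 + 2 * c₁ * α)
  have hc₃ : c₃ * (1 - c₁ * (-2 * α)) = c₂ := by
    simp only [c₃]; field_simp [hpos.ne']; ring
  set g := fun r => f r - c₃ * r ^ (-2 * α)
  have hg_diff : ∀ r ∈ Ici 1, DifferentiableAt ℝ g r := fun r hr =>
    (hdiff r hr).sub ((differentiableAt_rpow_const_of_ne _ (one_pos.trans_le hr).ne').const_mul _)
  have hg_ineq : ∀ r ∈ Ici 1, g r ≤ c₁ * r * deriv g r := fun r hr =>
    sub_rpow_le_const_mul_deriv (one_pos.trans_le hr) (hdiff r hr) (hc₃ ▸ hineq r hr)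
  have hc₃_nonneg : 0 ≤ c₃ := div_nonneg hc₂ hpos.le
  refine ⟨max (g 1) 0 + c₃, by positivity, fun r hr => le_mul_rpow_max_of_le_add hr hc₃_nonneg ?_⟩
  have := le_mul_rpow_of_le_const_mul_deriv hc₁ hg_diff hg_ineq hr
  simp only [g] at this ⊢
  linarith

/-- Real-variable decay lemma: a nonnegative function satisfying
`f(r) ≤ c₁ r f'(r) + c₂ r^{-2α}` with `c₁ < 0` and `1 + 2c₁α > 0` decays like
`r^{max(1/c₁, -2α)}`. -/
theorem decay_from_differential_inequality_with_source (α c₁ c₂ : ℝ)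
    (hα : 0 < α) (hc₁ : c₁ < 0) (hc₂ : 0 ≤ c₂) (hpos : 0 < 1 + 2 * c₁ * α)
    (f : ℝ → ℝ)
    (hdiff : ∀ r : ℝ, 1 ≤ r → DifferentiableAt ℝ f r)
    (hnonneg : ∀ r : ℝ, 1 ≤ r → 0 ≤ f r)
    (hineq : ∀ r : ℝ, 1 ≤ r → f r ≤ c₁ * r * deriv f r + c₂ * r ^ (-2 * α)) :
    ∃ K : ℝ, 0 ≤ K ∧ ∀ r : ℝ, 1 ≤ r → f r ≤ K * r ^ (max (1 / c₁) (-2 * α)) :=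
  decay_from_differential_inequality_with_source_general α c₁ c₂ hc₁ hc₂ hpos f hdiff hineq
end

section
/- Let (X, d) be a metric space, μ a Borel measure on X, q ∈ X, C > 0 and r > 0. Suppose that every 1-Lipschitz function f : X → ℝ vanishing outside the open ball B(q, r) satisfies (∫_X |f|⁴ dμ)^{1/4} ≤ C · μ(B(q, r))^{1/2}. Then (r/2) · μ(B(q, r/2))^{1/4} ≤ C · μ(B(q, r))^{1/2}. -/
open Metric MeasureTheory

noncomputable def tent {X : Type*} [PseudoMetricSpace X] (q : X) (r : ℝ) (x : X) : ℝ :=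
  max (r - dist q x) 0

section Tent

variable {X : Type*} [PseudoMetricSpace X] (q : X) (r : ℝ)

theorem lipschitzWith_one_tent : LipschitzWith 1 (tent q r) := by
  unfold tent
  simpa using ((LipschitzWith.const r).sub (LipschitzWith.dist_right q)).max_const 0

variable {q r}

theorem tent_nonneg (x : X) : 0 ≤ tent q r x :=
  le_max_right _ _

theorem tent_eq_zero_of_notMem_ball {x : X} (hx : x ∉ ball q r) : tent q r x = 0 :=
  max_eq_right <| sub_nonpos.mpr <| dist_comm q x ▸ not_lt.mp hx

theorem sub_le_tent_of_mem_ball {s : ℝ} {x : X} (hx : x ∈ ball q s) : r - s ≤ tent q r x :=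
  le_max_of_le_left <| by linarith [dist_comm q x ▸ mem_ball.mp hx]

end Tent

/-- Chebyshev's inequality in the form of a lower bound for the `Lⁿ` norm. -/
theorem ofReal_mul_measure_rpow_le_lintegral_abs_pow {α : Type*} [MeasurableSpace α]
    (μ : Measure α) {f : α → ℝ} {s : Set α} (hs : MeasurableSet s) {a : ℝ} {n : ℕ} (hn : n ≠ 0)
    (hf : ∀ x ∈ s, a ≤ |f x|) :
    ENNReal.ofReal a * μ s ^ ((1 : ℝ) / n)
      ≤ (∫⁻ x, ENNReal.ofReal (|f x| ^ n) ∂μ) ^ ((1 : ℝ) / n) := by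
  have hpow : ENNReal.ofReal a ^ n * μ s ≤ ∫⁻ x, ENNReal.ofReal (|f x| ^ n) ∂μ :=
    calc ENNReal.ofReal a ^ n * μ s = ∫⁻ _ in s, ENNReal.ofReal a ^ n ∂μ :=
          (setLIntegral_const s _).symm
      _ ≤ ∫⁻ x in s, ENNReal.ofReal (|f x| ^ n) ∂μ := setLIntegral_mono' hs fun x hx => by
          rw [ENNReal.ofReal_pow (abs_nonneg _)]
          exact pow_le_pow_left₀ zero_le (ENNReal.ofReal_le_ofReal (hf x hx)) n
      _ ≤ ∫⁻ x, ENNReal.ofReal (|f x| ^ n) ∂μ := setLIntegral_le_lintegral s _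
  calc ENNReal.ofReal a * μ s ^ ((1 : ℝ) / n)
      = (ENNReal.ofReal a ^ n * μ s) ^ ((1 : ℝ) / n) := by
        rw [ENNReal.mul_rpow_of_nonneg _ _ (by positivity), one_div,
          ENNReal.pow_rpow_inv_natCast hn]
    _ ≤ _ := ENNReal.rpow_le_rpow hpow (by positivity)

theorem sobolev_test_function_step_general {X : Type*} [MetricSpace X] [MeasurableSpace X]
    [BorelSpace X] (μ : Measure X) (q : X) (C r : ℝ)
    (hSob : ∀ f : X → ℝ, LipschitzWith 1 f → (∀ x ∉ ball q r, f x = 0) →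
      (∫⁻ x, ENNReal.ofReal (|f x| ^ 4) ∂μ) ^ ((1 : ℝ) / 4)
        ≤ ENNReal.ofReal C * (μ (ball q r)) ^ ((1 : ℝ) / 2)) :
    ENNReal.ofReal (r / 2) * (μ (ball q (r / 2))) ^ ((1 : ℝ) / 4)
      ≤ ENNReal.ofReal C * (μ (ball q r)) ^ ((1 : ℝ) / 2) := by
  have htent : ∀ x ∈ ball q (r / 2), r / 2 ≤ |tent q r x| := fun x hx => by
    rw [abs_of_nonneg (tent_nonneg x)]
    linarith [sub_le_tent_of_mem_ball (r := r) hx]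
  calc ENNReal.ofReal (r / 2) * μ (ball q (r / 2)) ^ ((1 : ℝ) / 4)
      ≤ (∫⁻ x, ENNReal.ofReal (|tent q r x| ^ 4) ∂μ) ^ ((1 : ℝ) / 4) := by
        simpa using ofReal_mul_measure_rpow_le_lintegral_abs_pow μ measurableSet_ball
          (n := 4) (by norm_num) htent
    _ ≤ _ := hSob _ (lipschitzWith_one_tent q r) fun _ => tent_eq_zero_of_notMem_ball

/-- Test-function step in the lower volume growth lemma: a Sobolev-type
inequality for 1-Lipschitz functions supported in `B(q,r)`, applied to the
truncated distance function, yields the doubling-type inequality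
`(r/2) μ(B(q,r/2))^{1/4} ≤ C μ(B(q,r))^{1/2}`. -/
theorem sobolev_test_function_step {X : Type*} [MetricSpace X] [MeasurableSpace X]
    [BorelSpace X] (μ : Measure X) (q : X) (C r : ℝ) (hC : 0 < C) (hr : 0 < r)
    (hSob : ∀ f : X → ℝ, LipschitzWith 1 f → (∀ x ∉ ball q r, f x = 0) →
      (∫⁻ x, ENNReal.ofReal (|f x| ^ 4) ∂μ) ^ ((1 : ℝ) / 4)
        ≤ ENNReal.ofReal C * (μ (ball q r)) ^ ((1 : ℝ) / 2)) :
    ENNReal.ofReal (r / 2) * (μ (ball q (r / 2))) ^ ((1 : ℝ) / 4)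
      ≤ ENNReal.ofReal C * (μ (ball q r)) ^ ((1 : ℝ) / 2) :=
  sobolev_test_function_step_general μ q C r hSob
end
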